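/- arXiv:1404.4416 — 3 statements merged into one kernel-verified Lean document; each statement's English description precedes it below -/
import Mathlib

section
/- Let η be a binary word of length k and ℓ ≥ 1. Then the sum of |η^ℓ|_ξ² over all nonempty factors ξ of η is at least k²ℓ²/2, where η^ℓ denotes the ℓ-fold concatenation of η and |·|_ξ counts occurrences of ξ as a factor. -/
open Filter

/-- Number of occurrences of `ξ` as a factor of `w` (occurrence at position `i`
means `ξ = w_{i+1}...w_{i+|ξ|}`). -/
def occ (w ξ : List Bool) : ℕ :=
  ((List.range w.length).filter (fun i => ξ.isPrefixOf (w.drop i))).length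

/-- `ℓ`-fold concatenation `η^ℓ` of the word `η`. -/
def wpow (η : List Bool) (ℓ : ℕ) : List Bool := (List.replicate ℓ η).flatten

/-- The Kamae–Xue complexity `Σ(w) = Σ_{ξ ∈ {0,1}^+} |w|_ξ²`.  Since only
factors of `w` contribute nonzero terms, the sum is taken over the (finite) set
of nonempty sublists of `w`, which contains all factors of `w`. -/
def kxSum (w : List Bool) : ℕ :=
  ∑ ξ ∈ w.sublists.toFinset.filter (fun ξ => ξ ≠ []), (occ w ξ) ^ 2

/-- `Λ(w) = max{|η|²(ℓ+1)³ : η nonempty, ℓ ≥ 1, η^ℓ a factor of w}`. -/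
noncomputable def Lam (w : List Bool) : ℕ :=
  sSup {m | ∃ η ℓ, η ≠ ([] : List Bool) ∧ 1 ≤ ℓ ∧ wpow η ℓ <:+: w ∧
    m = η.length ^ 2 * (ℓ + 1) ^ 3}

/-- A nonempty word is prime (primitive) if it is not a proper power. -/
def IsPrimeWord (η : List Bool) : Prop :=
  η ≠ [] ∧ ∀ ζ ℓ, 2 ≤ ℓ → η ≠ wpow ζ ℓ

/-- `|v|_{ξ,m}`: occurrences of `ξ` in `v` ending in the last `m` positions. -/
def occEnd (v ξ : List Bool) (m : ℕ) : ℕ :=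
  ((List.range v.length).filter
    (fun i => ξ.isPrefixOf (v.drop i) && decide (v.length < i + ξ.length + m))).length

/-- The prefix `x_1 x_2 ⋯ x_n` of the infinite sequence `x`. -/
def pref (x : ℕ → Bool) (n : ℕ) : List Bool := (List.range n).map x

/-!
Each occurrence of `ξ` in `η` reappears in every one of the `ℓ` blocks of `η^ℓ`, so
`|η^ℓ|_ξ² ≥ ℓ² |η|_ξ² ≥ ℓ² |η|_ξ`. Summing over the factors `ξ` counts every pair (starting
position `i`, nonempty prefix of the suffix of `η` at `i`), that is `k + (k - 1) + ⋯ + 1`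
pairs, and `k(k + 1)/2 ≥ k²/2`.
-/

open Finset

lemma occ_eq_card_filter (w ξ : List Bool) :
    occ w ξ = #{i ∈ range w.length | ξ <+: w.drop i} := by
  simp only [occ, Finset.filter, Finset.range, Multiset.range, Multiset.filter_coe,
    Finset.card_mk, Multiset.coe_card, ← List.isPrefixOf_iff_prefix, Bool.decide_eq_true]

lemma occ_add_occ_le_occ_append (u v ξ : List Bool) :
    occ u ξ + occ v ξ ≤ occ (u ++ v) ξ := by
  simp only [occ, List.length_append, List.range_add, List.filter_append,
    List.filter_map, List.length_map]
  refine Nat.add_le_add ((List.monotone_filter_right _ fun i hi => ?_).length_le) (le_of_eq ?_)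
  · rw [List.isPrefixOf_iff_prefix] at hi ⊢
    rw [List.drop_append]
    exact hi.trans (List.prefix_append _ _)
  · congr 2
    funext i
    simp only [Function.comp_apply, List.drop_length_add_append]

lemma wpow_succ (η : List Bool) (ℓ : ℕ) : wpow η (ℓ + 1) = η ++ wpow η ℓ := by
  simp [wpow, List.replicate_succ]

lemma mul_occ_le_occ_wpow (η ξ : List Bool) (ℓ : ℕ) : ℓ * occ η ξ ≤ occ (wpow η ℓ) ξ := by
  induction ℓ with
  | zero => simp
  | succ ℓ ih =>
    rw [wpow_succ, Nat.succ_mul, add_comm]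
    exact (Nat.add_le_add_left ih _).trans (occ_add_occ_le_occ_append η _ ξ)

lemma length_le_card_filter_prefix {α : Type*} [DecidableEq α] {l : List α}
    {s : Finset (List α)} (hs : ∀ ξ, ξ ≠ [] → ξ <+: l → ξ ∈ s) :
    l.length ≤ #{ξ ∈ s | ξ <+: l} := by
  have hlen : ∀ m ∈ range l.length, (l.take (m + 1)).length = m + 1 := fun m hm => by
    simp only [List.length_take]
    exact min_eq_left (mem_range.1 hm)
  simpa using card_le_card_of_injOn (s := range l.length) (fun m => l.take (m + 1))
    (fun m hm => mem_filter.2 ⟨hs _ (List.ne_nil_of_length_pos (by rw [hlen m hm]; omega))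
      (List.take_prefix _ _), List.take_prefix _ _⟩)
    (fun m hm n hn h => by simpa [hlen m hm, hlen n hn] using congrArg List.length h)

lemma two_mul_sum_range_sub (k : ℕ) : 2 * ∑ i ∈ range k, (k - i) = k * (k + 1) := by
  calc 2 * ∑ i ∈ range k, (k - i) = 2 * ∑ i ∈ range (k + 1), (k + 1 - 1 - i) := by
        rw [sum_range_succ, Nat.add_sub_cancel, Nat.sub_self, add_zero]
    _ = 2 * ∑ i ∈ range (k + 1), i := by rw [sum_range_reflect (fun i => i)]
    _ = k * (k + 1) := by rw [mul_comm, sum_range_id_mul_two, Nat.add_sub_cancel, mul_comm]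

lemma length_mul_succ_le_two_mul_sum_occ (η : List Bool) :
    η.length * (η.length + 1) ≤
      2 * ∑ ξ ∈ η.sublists.toFinset.filter (fun ξ => ξ ≠ [] ∧ ξ <:+: η), occ η ξ := by
  set F := η.sublists.toFinset.filter (fun ξ => ξ ≠ [] ∧ ξ <:+: η)
  have hcount : ∑ ξ ∈ F, occ η ξ = ∑ i ∈ range η.length, #{ξ ∈ F | ξ <+: η.drop i} := by
    simp only [occ_eq_card_filter, card_filter]
    exact sum_comm
  have hsuffix : ∀ i ∈ range η.length, η.length - i ≤ #{ξ ∈ F | ξ <+: η.drop i} := by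
    intro i _
    rw [← List.length_drop]
    refine length_le_card_filter_prefix fun ξ hne hpre => ?_
    have hinf : ξ <:+: η := hpre.isInfix.trans (List.drop_suffix i η).isInfix
    exact mem_filter.2 ⟨List.mem_toFinset.2 (List.mem_sublists.2 hinf.sublist), hne, hinf⟩
  rw [← two_mul_sum_range_sub, hcount]
  exact Nat.mul_le_mul_left 2 (sum_le_sum hsuffix)

theorem sum_sq_occ_pow_ge_general (η : List Bool) (ℓ : ℕ) :
    η.length ^ 2 * ℓ ^ 2 ≤
      2 * ∑ ξ ∈ η.sublists.toFinset.filter (fun ξ => ξ ≠ [] ∧ ξ <:+: η),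
        (occ (wpow η ℓ) ξ) ^ 2 := by
  have hterm : ∀ ξ, ℓ ^ 2 * occ η ξ ≤ occ (wpow η ℓ) ξ ^ 2 := fun ξ =>
    calc ℓ ^ 2 * occ η ξ ≤ ℓ ^ 2 * occ η ξ ^ 2 :=
          Nat.mul_le_mul_left _ (Nat.le_self_pow two_ne_zero _)
      _ = (ℓ * occ η ξ) ^ 2 := by ring
      _ ≤ occ (wpow η ℓ) ξ ^ 2 := Nat.pow_le_pow_left (mul_occ_le_occ_wpow η ξ ℓ) 2
  calc η.length ^ 2 * ℓ ^ 2 ≤ ℓ ^ 2 * (η.length * (η.length + 1)) := by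
        rw [mul_comm, sq η.length]
        exact Nat.mul_le_mul_left _ (Nat.mul_le_mul_left _ η.length.le_succ)
    _ ≤ ℓ ^ 2 * (2 * ∑ ξ ∈ η.sublists.toFinset.filter (fun ξ => ξ ≠ [] ∧ ξ <:+: η), occ η ξ) :=
        Nat.mul_le_mul_left _ (length_mul_succ_le_two_mul_sum_occ η)
    _ ≤ _ := by
        rw [mul_left_comm, mul_sum]
        exact Nat.mul_le_mul_left 2 (sum_le_sum fun ξ _ => hterm ξ)

/-- For a word `η` of length `k` and `ℓ ≥ 1`, the sum of
`|η^ℓ|_ξ²` over all nonempty factors `ξ` of `η` is at least `k²ℓ²/2`. -/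
theorem sum_sq_occ_pow_ge (η : List Bool) (ℓ : ℕ) (hℓ : 1 ≤ ℓ) :
    η.length ^ 2 * ℓ ^ 2 ≤
      2 * ∑ ξ ∈ η.sublists.toFinset.filter (fun ξ => ξ ≠ [] ∧ ξ <:+: η),
        (occ (wpow η ℓ) ξ) ^ 2 :=
  sum_sq_occ_pow_ge_general η ℓ
end

section
/- Let w be a binary word of length n, m a positive integer, and suppose every word x_{i+1}...x_{i+m} of length m occurring in w at two starting positions at distance k apart (with i+k+m ≤ n, k ≥ 1) satisfies k ≥ m³/Λ(w), where Λ(w) = max{|η|²(ℓ+1)³ : η^ℓ ≺ w}. Then for every ξ ∈ {0,1}^m, |w|_ξ ≤ n·Λ(w)/m³, and hence Σ_{ξ∈{0,1}^m} |w|_ξ² ≤ n²Λ(w)/m³. -/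
open Filter

/-! Two occurrences of a word `ξ` of length `m` in `w` lie at least `m³/Λ(w)` apart, and each
needs a window of length `m` inside `w`; since `ξ` is itself a factor, `m² ≤ Λ(w)`, so already a
single window costs `m ≥ m³/Λ(w)`. Hence `ξ` occurs at most `nΛ(w)/m³` times. Occurrences of
distinct words of length `m` start at distinct positions, so `Σ_ξ |w|_ξ ≤ n`, and the quadratic
bound follows by weighting each `|w|_ξ` with itself. -/

def occPositions (w ξ : List Bool) : Finset ℕ :=
  (Finset.range w.length).filter (fun i => ξ <+: w.drop i)

lemma occ_eq_card_occPositions (w ξ : List Bool) : occ w ξ = (occPositions w ξ).card := by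
  simp only [occ, occPositions, Finset.filter, Finset.range, Multiset.range, Finset.card]
  congr 1
  exact List.filter_congr fun i _ => by
    rw [Bool.eq_iff_iff]
    simp [List.isPrefixOf_iff_prefix]

lemma take_drop_eq_of_mem_occPositions {w ξ : List Bool} {i : ℕ} (hi : i ∈ occPositions w ξ) :
    i + ξ.length ≤ w.length ∧ (w.drop i).take ξ.length = ξ := by
  obtain ⟨hin, hpre⟩ := Finset.mem_filter.mp hi
  have hlen := hpre.length_le
  rw [List.length_drop] at hlen
  exact ⟨by grind, (List.prefix_iff_eq_take.mp hpre).symm⟩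

lemma infix_of_mem_occPositions {w ξ : List Bool} {i : ℕ} (hi : i ∈ occPositions w ξ) :
    ξ <:+: w :=
  (Finset.mem_filter.mp hi).2.isInfix.trans (w.drop_suffix i).isInfix

lemma sum_occ_le_length (w : List Bool) {m : ℕ} {T : Finset (List Bool)}
    (hT : ∀ ξ ∈ T, ξ.length = m) : ∑ ξ ∈ T, occ w ξ ≤ w.length := by
  have hdisj : (T : Set (List Bool)).PairwiseDisjoint (occPositions w) := by
    intro ξ hξ ζ hζ hne
    refine Finset.disjoint_left.mpr fun i hiξ hiζ => hne ?_
    have eξ := (take_drop_eq_of_mem_occPositions hiξ).2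
    have eζ := (take_drop_eq_of_mem_occPositions hiζ).2
    rw [hT ξ hξ] at eξ
    rw [hT ζ hζ] at eζ
    exact eξ.symm.trans eζ
  calc ∑ ξ ∈ T, occ w ξ = (T.biUnion (occPositions w)).card := by
        simp only [occ_eq_card_occPositions, Finset.card_biUnion hdisj]
    _ ≤ (Finset.range w.length).card :=
        Finset.card_le_card (Finset.biUnion_subset.mpr fun _ _ => Finset.filter_subset _ _)
    _ = w.length := Finset.card_range _

lemma le_Lam {w η : List Bool} {ℓ : ℕ} (hη : η ≠ []) (hℓ : 1 ≤ ℓ) (hw : wpow η ℓ <:+: w) :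
    η.length ^ 2 * (ℓ + 1) ^ 3 ≤ Lam w := by
  refine le_csSup ⟨w.length ^ 2 * (w.length + 1) ^ 3, ?_⟩ ⟨η, ℓ, hη, hℓ, hw, rfl⟩
  rintro _ ⟨ζ, k, hζ, hk, hkw, rfl⟩
  have hlen : k * ζ.length ≤ w.length := by simpa [wpow] using hkw.length_le
  have hζpos : 1 ≤ ζ.length := List.length_pos_iff.mpr hζ
  gcongr
  · exact le_trans (Nat.le_mul_of_pos_left _ hk) hlen
  · exact le_trans (Nat.le_mul_of_pos_right _ hζpos) hlen

lemma sq_length_le_Lam {w ξ : List Bool} (hw : ξ <:+: w) : ξ.length ^ 2 ≤ Lam w := by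
  rcases eq_or_ne ξ [] with rfl | hξ
  · simp
  calc ξ.length ^ 2 ≤ ξ.length ^ 2 * (1 + 1) ^ 3 := Nat.le_mul_of_pos_right _ (by norm_num)
    _ ≤ Lam w := le_Lam hξ le_rfl (by simpa [wpow] using hw)

lemma card_mul_le_of_gap {m c Λ : ℕ} (hc : c ≤ m * Λ) (P : Finset ℕ) :
    ∀ n, (∀ i ∈ P, i + m ≤ n) → (∀ i ∈ P, ∀ j ∈ P, i < j → c ≤ (j - i) * Λ) →
      P.card * c ≤ n * Λ := by
  induction P using Finset.induction_on_max with
  | empty => simp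
  | insert a s hlt ih =>
    intro n hfit hgap
    rw [Finset.card_insert_of_notMem fun has => (hlt a has).false, add_mul, one_mul]
    have han := hfit a (Finset.mem_insert_self a s)
    rcases s.eq_empty_or_nonempty with rfl | hs
    · calc 0 * c + c ≤ m * Λ := by simpa using hc
        _ ≤ n * Λ := by gcongr; omega
    set b := s.max' hs
    have hb : b ∈ s := s.max'_mem hs
    have hs_le : s.card * c ≤ (b + m) * Λ :=
      ih (b + m) (fun i hi => by have := s.le_max' i hi; omega)
        (fun i hi j hj => hgap i (Finset.mem_insert_of_mem hi) j (Finset.mem_insert_of_mem hj))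
    have hab : c ≤ (a - b) * Λ :=
      hgap b (Finset.mem_insert_of_mem hb) a (Finset.mem_insert_self a s) (hlt b hb)
    calc s.card * c + c ≤ (b + m) * Λ + (a - b) * Λ := add_le_add hs_le hab
      _ = (a + m) * Λ := by rw [← add_mul]; congr 1; have := hlt b hb; omega
      _ ≤ n * Λ := by gcongr

lemma sum_sq_mul_le {ι : Type*} {T : Finset ι} {f : ι → ℕ} {c B n : ℕ}
    (hf : ∀ x ∈ T, f x * c ≤ B) (hsum : ∑ x ∈ T, f x ≤ n) :
    (∑ x ∈ T, f x ^ 2) * c ≤ n * B :=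
  calc (∑ x ∈ T, f x ^ 2) * c = ∑ x ∈ T, f x * (f x * c) := by
        rw [Finset.sum_mul]; exact Finset.sum_congr rfl fun _ _ => by ring
    _ ≤ ∑ x ∈ T, f x * B := Finset.sum_le_sum fun x hx => Nat.mul_le_mul_left _ (hf x hx)
    _ = (∑ x ∈ T, f x) * B := (Finset.sum_mul _ _ _).symm
    _ ≤ n * B := Nat.mul_le_mul_right _ hsum

lemma occ_mul_le_of_repetition_gap {w : List Bool} {m : ℕ}
    (h : ∀ i k, 1 ≤ k → i + k + m ≤ w.length →
      (w.drop i).take m = (w.drop (i + k)).take m → m ^ 3 ≤ k * Lam w)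
    {ξ : List Bool} (hξ : ξ.length = m) : occ w ξ * m ^ 3 ≤ w.length * Lam w := by
  subst hξ
  rw [occ_eq_card_occPositions]
  rcases (occPositions w ξ).eq_empty_or_nonempty with hempty | ⟨i₀, hi₀⟩
  · simp [hempty]
  have hc : ξ.length ^ 3 ≤ ξ.length * Lam w := by
    rw [pow_succ']
    exact Nat.mul_le_mul_left _ (sq_length_le_Lam (infix_of_mem_occPositions hi₀))
  refine card_mul_le_of_gap hc _ _ (fun i hi => (take_drop_eq_of_mem_occPositions hi).1) ?_
  intro i hi j hj hij
  obtain ⟨-, hξi⟩ := take_drop_eq_of_mem_occPositions hi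
  obtain ⟨hjn, hξj⟩ := take_drop_eq_of_mem_occPositions hj
  exact h i (j - i) (by omega) (by omega) (by rw [Nat.add_sub_cancel' hij.le, hξi, hξj])

theorem occ_le_of_repetition_gap_general (w : List Bool) (m : ℕ)
    (h : ∀ i k, 1 ≤ k → i + k + m ≤ w.length →
      (w.drop i).take m = (w.drop (i + k)).take m → m ^ 3 ≤ k * Lam w) :
    (∀ ξ : List Bool, ξ.length = m → occ w ξ * m ^ 3 ≤ w.length * Lam w) ∧
    (∑ ξ ∈ w.sublists.toFinset.filter (fun ξ => ξ.length = m), (occ w ξ) ^ 2) * m ^ 3 ≤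
      w.length ^ 2 * Lam w := by
  have hT : ∀ ξ ∈ w.sublists.toFinset.filter (fun ξ => ξ.length = m), ξ.length = m :=
    fun ξ hξ => (Finset.mem_filter.mp hξ).2
  refine ⟨fun ξ => occ_mul_le_of_repetition_gap h, ?_⟩
  rw [sq w.length, mul_assoc]
  exact sum_sq_mul_le (fun ξ hξ => occ_mul_le_of_repetition_gap h (hT ξ hξ))
    (sum_occ_le_length w hT)

/-- if every length-`m` word occurring in `w` at two positions at
distance `k` satisfies `k ≥ m³/Λ(w)`, then `|w|_ξ ≤ nΛ(w)/m³` for every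
`ξ ∈ {0,1}^m`, and hence `Σ_{ξ∈{0,1}^m} |w|_ξ² ≤ n²Λ(w)/m³`. -/
theorem occ_le_of_repetition_gap (w : List Bool) (m : ℕ) (hm : 1 ≤ m)
    (h : ∀ i k, 1 ≤ k → i + k + m ≤ w.length →
      (w.drop i).take m = (w.drop (i + k)).take m → m ^ 3 ≤ k * Lam w) :
    (∀ ξ : List Bool, ξ.length = m → occ w ξ * m ^ 3 ≤ w.length * Lam w) ∧
    (∑ ξ ∈ w.sublists.toFinset.filter (fun ξ => ξ.length = m), (occ w ξ) ^ 2) * m ^ 3 ≤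
      w.length ^ 2 * Lam w :=
  occ_le_of_repetition_gap_general w m h
end

section
/- The number of factors ξ of η^n with |ξ| ≥ k (counted as distinct words), where η is a prime binary word of length k, equals the number of pairs (i,j) with 1 ≤ i ≤ k, k ≤ j ≤ kn, and i+j−1 ≤ kn; in particular each such factor is uniquely determined by its length and its starting position modulo k. -/
open Filter

/-!
A factor of `η^n` is determined by its length `j` and its starting position `p`, and since
`η^n` is `|η|`-periodic only `p mod |η|` matters; this gives surjectivity of the counting map.
For injectivity, two factors of the same length `j ≥ |η|` starting at `r < r' < |η|` have the
rotations `η.rotate r ≠ η.rotate r'` as prefixes of length `|η|`: a primitive word is fixed by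
no nontrivial rotation, because `uv = vu` forces `u` and `v` to be powers of a common word.
-/

@[simp] lemma wpow_one (η : List Bool) : wpow η 1 = η := by simp [wpow]

lemma length_wpow (η : List Bool) (n : ℕ) : (wpow η n).length = n * η.length := by
  rw [wpow, List.length_flatten, List.map_replicate, List.sum_replicate, smul_eq_mul]

lemma wpow_add (η : List Bool) (m n : ℕ) : wpow η (m + n) = wpow η m ++ wpow η n := by
  rw [wpow, wpow, wpow, List.replicate_add, List.flatten_append]

lemma wpow_prefix_wpow (η : List Bool) {m n : ℕ} (h : m ≤ n) : wpow η m <+: wpow η n :=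
  ⟨wpow η (n - m), by rw [← wpow_add, Nat.add_sub_cancel' h]⟩

lemma drop_mul_length_wpow (η : List Bool) {m n : ℕ} (h : m ≤ n) :
    (wpow η n).drop (m * η.length) = wpow η (n - m) := by
  conv_lhs => rw [← Nat.add_sub_cancel' h, wpow_add]
  exact List.drop_left' (length_wpow η m)

lemma exists_eq_wpow_of_append_comm {u v : List Bool} (h : u ++ v = v ++ u) :
    ∃ w a b, u = wpow w a ∧ v = wpow w b := by
  induction hl : u.length + v.length using Nat.strong_induction_on generalizing u v with
  | _ N ih =>
  wlog huv : u.length ≤ v.length generalizing u v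
  · obtain ⟨w, a, b, rfl, rfl⟩ := this h.symm (by omega) (by omega)
    exact ⟨w, b, a, rfl, rfl⟩
  rcases eq_or_ne u [] with rfl | hu
  · exact ⟨v, 0, 1, rfl, (wpow_one v).symm⟩
  obtain ⟨v', rfl⟩ : u <+: v :=
    List.prefix_of_prefix_length_le (h ▸ List.prefix_append u v) (List.prefix_append v u) huv
  have hcomm : u ++ v' = v' ++ u := by simpa using h
  have hu' : 0 < u.length := List.length_pos_iff.mpr hu
  obtain ⟨w, a, b, rfl, rfl⟩ := ih _ (by simp only [List.length_append] at hl; omega) hcomm rfl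
  exact ⟨w, a, a + b, rfl, (wpow_add w a b).symm⟩

lemma IsPrimeWord.rotate_ne_self {η : List Bool} (hη : IsPrimeWord η) {s : ℕ} (hs : 0 < s)
    (hsη : s < η.length) : η.rotate s ≠ η := by
  intro hrot
  have hcomm : η.take s ++ η.drop s = η.drop s ++ η.take s := by
    rw [List.take_append_drop, ← List.rotate_eq_drop_append_take hsη.le, hrot]
  obtain ⟨w, a, b, hwa, hwb⟩ := exists_eq_wpow_of_append_comm hcomm
  have ha : a ≠ 0 := by
    rintro rfl
    exact (List.take_eq_nil_iff.mp hwa).elim hs.ne' hη.1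
  have hb : b ≠ 0 := by
    rintro rfl
    exact hsη.not_ge (List.drop_eq_nil_iff.mp hwb)
  refine hη.2 w (a + b) (by omega) ?_
  rw [wpow_add, ← hwa, ← hwb, List.take_append_drop]

lemma IsPrimeWord.rotate_injOn {η : List Bool} (hη : IsPrimeWord η) {r r' : ℕ}
    (hr : r < η.length) (hr' : r' < η.length) (h : η.rotate r = η.rotate r') : r = r' := by
  wlog hlt : r < r'
  · rcases (not_lt.mp hlt).eq_or_lt with heq | hgt
    · exact heq.symm
    · exact (this hη hr' hr h.symm hgt).symm
  refine absurd ?_ (hη.rotate_ne_self (s := r' - r) (by omega) (by omega))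
  rw [← List.rotate_eq_rotate (n := r), List.rotate_rotate, Nat.sub_add_cancel hlt.le, h]

lemma take_drop_wpow_mod (η : List Bool) {n i j : ℕ} (h : i + j ≤ n * η.length) :
    ((wpow η n).drop i).take j = ((wpow η n).drop (i % η.length)).take j := by
  set q := i / η.length
  have hdiv : q * η.length + i % η.length = i := by rw [mul_comm]; exact Nat.div_add_mod i _
  have hqn : q ≤ n := Nat.div_le_of_le_mul (by rw [mul_comm]; omega)
  have hfit : i % η.length + j ≤ (wpow η (n - q)).length := by
    rw [length_wpow, Nat.sub_mul]; omega
  conv_lhs => rw [← hdiv, ← List.drop_drop, drop_mul_length_wpow η hqn]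
  rw [List.prefix_iff_eq_take.mp ((wpow_prefix_wpow η (Nat.sub_le n q)).drop _), List.take_take,
    min_eq_left (by rw [List.length_drop]; omega)]

lemma take_length_drop_wpow (η : List Bool) {n r : ℕ} (hr : r ≤ η.length) (hn : 2 ≤ n) :
    ((wpow η n).drop r).take η.length = η.rotate r := by
  obtain ⟨m, rfl⟩ : ∃ m, n = 1 + 1 + m := ⟨n - 2, by omega⟩
  rw [wpow_add, wpow_add, wpow_one, List.append_assoc, List.drop_append_of_le_length hr,
    List.take_append, List.take_of_length_le (by simp), List.length_drop, Nat.sub_sub_self hr,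
    List.take_append_of_le_length hr, List.rotate_eq_drop_append_take hr]

lemma IsPrimeWord.take_drop_wpow_injOn {η : List Bool} (hη : IsPrimeWord η) {n r r' j : ℕ}
    (hr : r < η.length) (hr' : r' < η.length) (hj : η.length ≤ j)
    (hrj : r + j ≤ n * η.length) (hr'j : r' + j ≤ n * η.length)
    (h : ((wpow η n).drop r).take j = ((wpow η n).drop r').take j) : r = r' := by
  wlog hlt : r < r'
  · rcases (not_lt.mp hlt).eq_or_lt with heq | hgt
    · exact heq.symm
    · exact (this hη hr' hr hj hr'j hrj h.symm hgt).symm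
  have hn : 2 ≤ n := by
    by_contra! hn
    interval_cases n <;> omega
  have hk := congrArg (List.take η.length) h
  rw [List.take_take, List.take_take, min_eq_left hj, take_length_drop_wpow η hr.le hn,
    take_length_drop_wpow η hr'.le hn] at hk
  exact hη.rotate_injOn hr hr' hk

lemma exists_take_drop_wpow_eq_of_infix {η ξ : List Bool} (hη : η ≠ []) {n : ℕ}
    (hξ : ξ <:+: wpow η n) :
    ∃ r < η.length, r + ξ.length ≤ n * η.length ∧ ((wpow η n).drop r).take ξ.length = ξ := by
  obtain ⟨s, t, hst⟩ := hξ
  have hlen := congrArg List.length hst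
  simp only [List.length_append, length_wpow] at hlen
  have hpos : 0 < η.length := List.length_pos_iff.mpr hη
  refine ⟨s.length % η.length, Nat.mod_lt _ hpos, ?_, ?_⟩
  · have := Nat.mod_le s.length η.length
    omega
  · rw [← take_drop_wpow_mod η (by omega), ← hst, List.append_assoc, List.drop_left,
      List.take_left]

/-- the number of distinct factors `ξ` of `η^n` with `|ξ| ≥ k`
(`η` prime of length `k`) equals the number of pairs `(i,j)` with `1 ≤ i ≤ k`,
`k ≤ j ≤ kn`, `i + j − 1 ≤ kn`. -/
theorem card_factors_pow (η : List Bool) (k n : ℕ)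
    (hη : IsPrimeWord η) (hk : η.length = k) :
    ((wpow η n).sublists.toFinset.filter
        (fun ξ => k ≤ ξ.length ∧ ξ <:+: wpow η n)).card =
      (((Finset.Icc 1 k) ×ˢ (Finset.Icc k (k * n))).filter
        (fun p => p.1 + p.2 ≤ k * n + 1)).card := by
  subst hk
  rw [mul_comm η.length n]
  have hlen (i j : ℕ) (h : i + j ≤ n * η.length) : (((wpow η n).drop i).take j).length = j := by
    rw [List.length_take, List.length_drop, length_wpow]; omega
  symm
  refine Finset.card_bij (fun p _ => ((wpow η n).drop (p.1 - 1)).take p.2) ?_ ?_ ?_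
  · rintro ⟨i, j⟩ hp
    simp only [Finset.mem_filter, Finset.mem_product, Finset.mem_Icc] at hp
    have hinf : ((wpow η n).drop (i - 1)).take j <:+: wpow η n :=
      (List.take_prefix _ _).isInfix.trans (List.drop_suffix _ _).isInfix
    simp only [Finset.mem_filter, List.mem_toFinset, List.mem_sublists, hinf.sublist, hinf,
      hlen (i - 1) j (by omega), true_and, and_true]
    exact hp.1.2.1
  · rintro ⟨i, j⟩ hp ⟨i', j'⟩ hp' h
    simp only [Finset.mem_filter, Finset.mem_product, Finset.mem_Icc] at hp hp' h
    obtain rfl : j = j' := by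
      simpa [hlen (i - 1) j (by omega), hlen (i' - 1) j' (by omega)] using congrArg List.length h
    have := hη.take_drop_wpow_injOn (by omega) (by omega) hp.1.2.1 (by omega) (by omega) h
    simp only [Prod.mk.injEq, and_true]
    omega
  · intro ξ hξ
    simp only [Finset.mem_filter, List.mem_toFinset, List.mem_sublists] at hξ
    obtain ⟨r, hr, hrξ, hξeq⟩ := exists_take_drop_wpow_eq_of_infix hη.1 hξ.2.2
    refine ⟨(r + 1, ξ.length), ?_, by simpa using hξeq⟩
    simp only [Finset.mem_filter, Finset.mem_product, Finset.mem_Icc]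
    omega
end
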